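/- For every real number c, ∫_{−∞}^{∞} √|s| / ((c − s)² + 1) ds = (π/√2)·(√(√(1+c²) − c) + √(√(1+c²) + c)). -/

import Mathlib

open Real MeasureTheory

open Set Filter Topology

set_option maxHeartbeats 1000000

private lemma deriv_alg (a d P u : ℝ) (ha : a ≠ 0) (hd : d ≠ 0) (hP : P ≠ 0)
    (hQ : P + 2 * a * u ≠ 0) :
    1 / (4 * a) * ((2 * u - a) / P - (2 * u + a) / (P + 2 * a * u))
      + 1 / (2 * d) * (d / (2 * P) + d / (2 * (P + 2 * a * u)))
      = u ^ 2 / (P * (P + 2 * a * u)) := by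
  rw [div_sub_div _ _ hP hQ, div_add_div _ _ (mul_ne_zero two_ne_zero hP) (mul_ne_zero two_ne_zero hQ)]
  field_simp
  ring

lemma key_halfline (c : ℝ) :
    IntegrableOn (fun u : ℝ => u ^ 2 / ((u ^ 2 - c) ^ 2 + 1)) (Set.Ioi 0) ∧
    ∫ u in Set.Ioi (0:ℝ), u ^ 2 / ((u ^ 2 - c) ^ 2 + 1)
      = π / (2 * Real.sqrt (2 * (Real.sqrt (1 + c ^ 2) - c))) := by
  set β := Real.sqrt (1 + c ^ 2) with hβdef
  have hβsq : β ^ 2 = 1 + c ^ 2 := Real.sq_sqrt (by positivity)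
  have hβ0 : 0 ≤ β := Real.sqrt_nonneg _
  have habs : |c| < β := by nlinarith [sq_abs c, abs_nonneg c]
  have hbc1 : 0 < β - c := by have := abs_lt.mp habs; linarith [this.2]
  have hbc2 : 0 < β + c := by have := abs_lt.mp habs; linarith [this.1]
  set α := Real.sqrt (2 * (β + c)) with hαdef
  set δ := Real.sqrt (2 * (β - c)) with hδdef
  have hα : 0 < α := Real.sqrt_pos.mpr (by linarith)
  have hδ : 0 < δ := Real.sqrt_pos.mpr (by linarith)
  have hα2 : α ^ 2 = 2 * (β + c) := Real.sq_sqrt (by linarith)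
  have hδ2 : δ ^ 2 = 2 * (β - c) := Real.sq_sqrt (by linarith)
  have hDm : ∀ u : ℝ, 0 < u ^ 2 - α * u + β := by
    intro u; nlinarith [sq_nonneg (2 * u - α), mul_pos hδ hδ]
  have hDp : ∀ u : ℝ, 0 < u ^ 2 + α * u + β := by
    intro u; nlinarith [sq_nonneg (2 * u + α), mul_pos hδ hδ]
  set F : ℝ → ℝ := fun u =>
    (1 / (4 * α)) * (Real.log (u ^ 2 - α * u + β) - Real.log (u ^ 2 + α * u + β))
      + (1 / (2 * δ)) * (Real.arctan ((2 * u - α) / δ) + Real.arctan ((2 * u + α) / δ))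
    with hFdef
  have hF : ∀ u : ℝ, HasDerivAt F (u ^ 2 / ((u ^ 2 - c) ^ 2 + 1)) u := by
    intro u
    have h1 : HasDerivAt (fun u : ℝ => u ^ 2 - α * u + β) (2 * u - α) u := by
      simpa using ((hasDerivAt_pow 2 u).sub ((hasDerivAt_id u).const_mul α)).add_const β
    have h2 : HasDerivAt (fun u : ℝ => u ^ 2 + α * u + β) (2 * u + α) u := by
      simpa using ((hasDerivAt_pow 2 u).add ((hasDerivAt_id u).const_mul α)).add_const β
    have h3 : HasDerivAt (fun u : ℝ => (2 * u - α) / δ) (2 / δ) u := by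
      simpa using (((hasDerivAt_id u).const_mul (2:ℝ)).sub_const α).div_const δ
    have h4 : HasDerivAt (fun u : ℝ => (2 * u + α) / δ) (2 / δ) u := by
      simpa using (((hasDerivAt_id u).const_mul (2:ℝ)).add_const α).div_const δ
    have hd : HasDerivAt F
        ((1 / (4 * α)) * ((2 * u - α) / (u ^ 2 - α * u + β) - (2 * u + α) / (u ^ 2 + α * u + β))
          + (1 / (2 * δ)) * (1 / (1 + ((2 * u - α) / δ) ^ 2) * (2 / δ)
              + 1 / (1 + ((2 * u + α) / δ) ^ 2) * (2 / δ))) u := by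
      exact (((h1.log (hDm u).ne').sub (h2.log (hDp u).ne')).const_mul _).add
        ((h3.arctan.add h4.arctan).const_mul _)
    convert hd using 1
    have e1 : 1 + ((2 * u - α) / δ) ^ 2 = (4 * (u ^ 2 - α * u + β)) / δ ^ 2 := by
      field_simp
      linear_combination hδ2 + hα2
    have e2 : 1 + ((2 * u + α) / δ) ^ 2 = (4 * (u ^ 2 + α * u + β)) / δ ^ 2 := by
      field_simp
      linear_combination hδ2 + hα2
    have k1 : 1 / (4 * (u ^ 2 - α * u + β) / δ ^ 2) * (2 / δ)
        = δ / (2 * (u ^ 2 - α * u + β)) := by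
      rw [one_div, inv_div, div_mul_div_comm,
        div_eq_div_iff (mul_ne_zero (by nlinarith [hDm u]) hδ.ne')
          (by nlinarith [hDm u] : (2 * (u ^ 2 - α * u + β) : ℝ) ≠ 0)]
      ring
    have k2 : 1 / (4 * (u ^ 2 + α * u + β) / δ ^ 2) * (2 / δ)
        = δ / (2 * (u ^ 2 + α * u + β)) := by
      rw [one_div, inv_div, div_mul_div_comm,
        div_eq_div_iff (mul_ne_zero (by nlinarith [hDp u]) hδ.ne')
          (by nlinarith [hDp u] : (2 * (u ^ 2 + α * u + β) : ℝ) ≠ 0)]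
      ring
    rw [e1, e2, k1, k2]
    have hQeq : u ^ 2 + α * u + β = (u ^ 2 - α * u + β) + 2 * α * u := by ring
    have hprod2 : (u ^ 2 - α * u + β) * ((u ^ 2 - α * u + β) + 2 * α * u)
        = (u ^ 2 - c) ^ 2 + 1 := by
      linear_combination (-(u ^ 2)) * hα2 + hβsq
    have halg := deriv_alg α δ (u ^ 2 - α * u + β) u hα.ne' hδ.ne' (hDm u).ne'
      (by rw [← hQeq]; exact (hDp u).ne')
    rw [hQeq, halg, hprod2]
  have hnonneg : ∀ u ∈ Set.Ioi (0:ℝ), 0 ≤ u ^ 2 / ((u ^ 2 - c) ^ 2 + 1) := by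
    intro u _; positivity
  have hlim : Tendsto F atTop (𝓝 (π / (2 * δ))) := by
    have larc1 : Tendsto (fun u : ℝ => Real.arctan ((2 * u - α) / δ)) atTop (𝓝 (π / 2)) := by
      refine (tendsto_arctan_atTop.mono_right nhdsWithin_le_nhds).comp ?_
      exact Tendsto.atTop_div_const hδ
        (tendsto_atTop_add_const_right _ (-α) (Tendsto.const_mul_atTop two_pos tendsto_id))
    have larc2 : Tendsto (fun u : ℝ => Real.arctan ((2 * u + α) / δ)) atTop (𝓝 (π / 2)) := by
      refine (tendsto_arctan_atTop.mono_right nhdsWithin_le_nhds).comp ?_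
      exact Tendsto.atTop_div_const hδ
        (tendsto_atTop_add_const_right _ α (Tendsto.const_mul_atTop two_pos tendsto_id))
    have llog : Tendsto (fun u : ℝ =>
        Real.log (u ^ 2 - α * u + β) - Real.log (u ^ 2 + α * u + β)) atTop (𝓝 0) := by
      have hratio : Tendsto (fun u : ℝ =>
          (1 - α * u⁻¹ + β * (u⁻¹ * u⁻¹)) / (1 + α * u⁻¹ + β * (u⁻¹ * u⁻¹))) atTop (𝓝 1) := by
        have h0 : Tendsto (fun u : ℝ => u⁻¹) atTop (𝓝 0) := tendsto_inv_atTop_zero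
        have hc1 : Tendsto (fun _ : ℝ => (1:ℝ)) atTop (𝓝 1) := tendsto_const_nhds
        have hnum : Tendsto (fun u : ℝ => 1 - α * u⁻¹ + β * (u⁻¹ * u⁻¹)) atTop (𝓝 1) := by
          have := (hc1.sub (h0.const_mul α)).add ((h0.mul h0).const_mul β)
          simpa using this
        have hden : Tendsto (fun u : ℝ => 1 + α * u⁻¹ + β * (u⁻¹ * u⁻¹)) atTop (𝓝 1) := by
          have := (hc1.add (h0.const_mul α)).add ((h0.mul h0).const_mul β)
          simpa using this
        have h := hnum.div hden one_ne_zero; rw [div_one] at h; exact h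
      have hcomp : Tendsto (fun u : ℝ => Real.log
          ((1 - α * u⁻¹ + β * (u⁻¹ * u⁻¹)) / (1 + α * u⁻¹ + β * (u⁻¹ * u⁻¹)))) atTop (𝓝 0) := by
        have := (Real.continuousAt_log one_ne_zero).tendsto.comp hratio
        rw [Real.log_one] at this; exact this
      refine hcomp.congr' ?_
      filter_upwards [eventually_gt_atTop (0:ℝ)] with u hu
      have hu0 : u ≠ 0 := hu.ne'
      have hden : 1 + α * u⁻¹ + β * (u⁻¹ * u⁻¹) = (u ^ 2 + α * u + β) / u ^ 2 := by
        field_simp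
      have hnum : 1 - α * u⁻¹ + β * (u⁻¹ * u⁻¹) = (u ^ 2 - α * u + β) / u ^ 2 := by
        field_simp
      rw [hnum, hden]
      have hq : (u ^ 2 - α * u + β) / u ^ 2 / ((u ^ 2 + α * u + β) / u ^ 2)
          = (u ^ 2 - α * u + β) / (u ^ 2 + α * u + β) := by
        rw [div_div_div_comm, div_self (pow_ne_zero 2 hu0), div_one]
      rw [hq, Real.log_div (hDm u).ne' (hDp u).ne']
    have := (llog.const_mul (1 / (4 * α))).add ((larc1.add larc2).const_mul (1 / (2 * δ)))
    convert this using 2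
    field_simp
    ring
  have hF0 : F 0 = 0 := by
    have hr : F 0 = 1 / (4 * α)
          * (Real.log ((0:ℝ) ^ 2 - α * 0 + β) - Real.log ((0:ℝ) ^ 2 + α * 0 + β))
        + 1 / (2 * δ)
          * (Real.arctan ((2 * 0 - α) / δ) + Real.arctan ((2 * 0 + α) / δ)) := rfl
    rw [hr, show (2 * (0:ℝ) - α) / δ = -(α / δ) from by ring,
      show (2 * (0:ℝ) + α) / δ = α / δ from by ring, Real.arctan_neg,
      show (0:ℝ) ^ 2 - α * 0 + β = β from by ring,
      show (0:ℝ) ^ 2 + α * 0 + β = β from by ring]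
    ring
  constructor
  · exact integrableOn_Ioi_deriv_of_nonneg' (fun x _ => hF x) hnonneg hlim
  · have := integral_Ioi_of_hasDerivAt_of_nonneg' (fun x _ => hF x) hnonneg hlim
    rw [this, hF0, sub_zero]

lemma subst_halfline (c : ℝ) :
    IntegrableOn (fun s : ℝ => Real.sqrt |s| / ((c - s) ^ 2 + 1)) (Set.Ioi 0) ∧
    ∫ s in Set.Ioi (0:ℝ), Real.sqrt |s| / ((c - s) ^ 2 + 1)
      = 2 * ∫ u in Set.Ioi (0:ℝ), u ^ 2 / ((u ^ 2 - c) ^ 2 + 1) := by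
  set f : ℝ → ℝ := fun s => Real.sqrt |s| / ((c - s) ^ 2 + 1) with hfdef
  have hcong : ∀ x ∈ Set.Ioi (0:ℝ),
      (|(2:ℝ)| * x ^ ((2:ℝ) - 1)) • f (x ^ (2:ℝ)) = 2 * (x ^ 2 / ((x ^ 2 - c) ^ 2 + 1)) := by
    intro x hx
    have hx0 : (0:ℝ) < x := hx
    have h2 : (x : ℝ) ^ (2:ℝ) = x ^ 2 := by
      rw [show (2:ℝ) = ((2:ℕ) : ℝ) by norm_num, Real.rpow_natCast]
    have h1 : (x : ℝ) ^ ((2:ℝ) - 1) = x := by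
      norm_num
    rw [h1, h2, smul_eq_mul, hfdef]
    have habs : Real.sqrt |x ^ 2| = x := by
      rw [abs_of_nonneg (sq_nonneg x), Real.sqrt_sq hx0.le]
    simp only
    rw [habs, show (c - x ^ 2) ^ 2 = (x ^ 2 - c) ^ 2 from by ring]
    norm_num
    ring
  have hint : IntegrableOn f (Set.Ioi 0) := by
    rw [← integrableOn_Ioi_comp_rpow_iff f (by norm_num : (2:ℝ) ≠ 0)]
    exact IntegrableOn.congr_fun ((key_halfline c).1.const_mul 2)
      (fun x hx => (hcong x hx).symm) measurableSet_Ioi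
  refine ⟨hint, ?_⟩
  have := MeasureTheory.integral_comp_rpow_Ioi f (by norm_num : (2:ℝ) ≠ 0)
  rw [← this, setIntegral_congr_fun measurableSet_Ioi hcong, integral_const_mul]

lemma integrableOn_Iio_of_neg {f : ℝ → ℝ} (h : IntegrableOn (fun x => f (-x)) (Set.Ioi 0)) :
    IntegrableOn f (Set.Iio 0) := by
  have A : MeasurableEmbedding (fun x : ℝ => -x) :=
    (Homeomorph.neg ℝ).isClosedEmbedding.measurableEmbedding
  have hpre : (fun x : ℝ => -x) ⁻¹' (Set.Iio 0) = Set.Ioi 0 := by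
    ext x; simp
  have hmap : (volume : Measure ℝ).restrict (Set.Iio 0)
      = Measure.map (fun x : ℝ => -x) ((volume : Measure ℝ).restrict (Set.Ioi 0)) := by
    conv_lhs => rw [← Measure.map_neg_eq_self (volume : Measure ℝ)]
    rw [Measure.restrict_map A.measurable measurableSet_Iio, hpre]
  rw [IntegrableOn, hmap, A.integrable_map_iff]
  exact h

/-- **Explicit evaluation of the Poisson-type integral of `√|t|`:**
for every real `c`,
`∫_{-∞}^{∞} √|s|/((c-s)² + 1) ds = (π/√2)(√(√(1+c²) - c) + √(√(1+c²) + c))`. -/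
theorem poisson_integral_sqrt_abs (c : ℝ) :
    ∫ s : ℝ, Real.sqrt |s| / ((c - s)^2 + 1)
      = (π / Real.sqrt 2)
        * (Real.sqrt (Real.sqrt (1 + c^2) - c) + Real.sqrt (Real.sqrt (1 + c^2) + c)) := by
  set f : ℝ → ℝ := fun s => Real.sqrt |s| / ((c - s) ^ 2 + 1) with hfdef
  have hneg : ∀ x : ℝ, f (-x) = Real.sqrt |x| / (((-c) - x) ^ 2 + 1) := by
    intro x
    rw [hfdef]
    simp only [abs_neg]
    rw [show (c - -x) ^ 2 = ((-c) - x) ^ 2 from by ring]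
  have hIoiNeg : IntegrableOn (fun x => f (-x)) (Set.Ioi 0) := by
    exact IntegrableOn.congr_fun (subst_halfline (-c)).1
      (fun x _ => (hneg x).symm) measurableSet_Ioi
  have hIio : IntegrableOn f (Set.Iio 0) := integrableOn_Iio_of_neg hIoiNeg
  have hIic : IntegrableOn f (Set.Iic 0) := by
    rwa [integrableOn_Iic_iff_integrableOn_Iio]
  have hsplit : (∫ x in Set.Iic (0:ℝ), f x) + (∫ x in Set.Ioi (0:ℝ), f x) = ∫ x, f x :=
    intervalIntegral.integral_Iic_add_Ioi hIic (subst_halfline c).1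
  have hIicval : ∫ x in Set.Iic (0:ℝ), f x
      = 2 * ∫ u in Set.Ioi (0:ℝ), u ^ 2 / ((u ^ 2 - (-c)) ^ 2 + 1) := by
    have h1 := integral_comp_neg_Ioi (0:ℝ) f
    rw [neg_zero] at h1
    rw [← h1]
    have h2 : ∫ x in Set.Ioi (0:ℝ), f (-x)
        = ∫ x in Set.Ioi (0:ℝ), Real.sqrt |x| / (((-c) - x) ^ 2 + 1) :=
      setIntegral_congr_fun measurableSet_Ioi (fun x _ => hneg x)
    rw [h2, (subst_halfline (-c)).2]
  have hIoival : ∫ x in Set.Ioi (0:ℝ), f x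
      = 2 * ∫ u in Set.Ioi (0:ℝ), u ^ 2 / ((u ^ 2 - c) ^ 2 + 1) := (subst_halfline c).2
  set β := Real.sqrt (1 + c ^ 2) with hβdef
  have hβsq : β ^ 2 = 1 + c ^ 2 := Real.sq_sqrt (by positivity)
  have habs : |c| < β := by nlinarith [sq_abs c, abs_nonneg c, Real.sqrt_nonneg (1 + c ^ 2)]
  have hbc1 : 0 < β - c := by have := abs_lt.mp habs; linarith [this.2]
  have hbc2 : 0 < β + c := by have := abs_lt.mp habs; linarith [this.1]
  have hval1 : ∫ u in Set.Ioi (0:ℝ), u ^ 2 / ((u ^ 2 - c) ^ 2 + 1)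
      = π / (2 * Real.sqrt (2 * (β - c))) := (key_halfline c).2
  have hval2 : ∫ u in Set.Ioi (0:ℝ), u ^ 2 / ((u ^ 2 - (-c)) ^ 2 + 1)
      = π / (2 * Real.sqrt (2 * (β + c))) := by
    have := (key_halfline (-c)).2
    rw [show (1 + (-c) ^ 2 : ℝ) = 1 + c ^ 2 from by ring] at this
    rw [this, ← hβdef, show β - -c = β + c from by ring]
  have hgoal : ∫ x, f x
      = 2 * (π / (2 * Real.sqrt (2 * (β + c)))) + 2 * (π / (2 * Real.sqrt (2 * (β - c)))) := by
    rw [← hsplit, hIicval, hIoival, hval1, hval2]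
  rw [show (∫ s : ℝ, Real.sqrt |s| / ((c - s) ^ 2 + 1)) = ∫ x, f x from rfl, hgoal]
  have hmul : Real.sqrt (β - c) * Real.sqrt (β + c) = 1 := by
    rw [← Real.sqrt_mul hbc1.le, show (β - c) * (β + c) = 1 from by nlinarith [hβsq],
      Real.sqrt_one]
  have hs2 : (0:ℝ) < Real.sqrt 2 := Real.sqrt_pos.mpr (by norm_num)
  have hsp : (0:ℝ) < Real.sqrt (β + c) := Real.sqrt_pos.mpr hbc2
  have hsm : (0:ℝ) < Real.sqrt (β - c) := Real.sqrt_pos.mpr hbc1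
  have e1 : (Real.sqrt (β + c))⁻¹ = Real.sqrt (β - c) := (eq_inv_of_mul_eq_one_left hmul).symm
  have e2 : (Real.sqrt (β - c))⁻¹ = Real.sqrt (β + c) :=
    (eq_inv_of_mul_eq_one_left (by rw [mul_comm]; exact hmul)).symm
  rw [Real.sqrt_mul (by norm_num : (0:ℝ) ≤ 2) (β + c),
    Real.sqrt_mul (by norm_num : (0:ℝ) ≤ 2) (β - c)]
  field_simp
  linear_combination (-1:ℝ) * hmul
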